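/- |f(z)| = 1 if and only if z is real, where f is the Beltrami-Klein map. -/

import Mathlib

/-- The Beltrami-Klein map `f(z) = 1 - 2(1 + i·Re z)/(1 + |z|²)`. -/
noncomputable def bkMap (z : ℂ) : ℂ :=
  1 - 2 * (1 + Complex.I * z.re) / (1 + ‖z‖ ^ 2)

lemma bkMap_eq (z : ℂ) :
    bkMap z = 1 - (2 + 2 * z.re * Complex.I) / ((1 + ‖z‖ ^ 2 : ℝ) : ℂ) := by
  rw [bkMap]
  push_cast
  ring

lemma bkMap_re (z : ℂ) : (bkMap z).re = 1 - 2 / (1 + ‖z‖ ^ 2) := by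
  rw [bkMap_eq, Complex.sub_re, Complex.div_ofReal_re]
  simp

lemma bkMap_im (z : ℂ) : (bkMap z).im = -(2 * z.re) / (1 + ‖z‖ ^ 2) := by
  rw [bkMap_eq, Complex.sub_im, Complex.div_ofReal_im]
  simp [neg_div]

lemma one_sub_sq_norm_bkMap (z : ℂ) :
    1 - ‖bkMap z‖ ^ 2 = 4 * z.im ^ 2 / (1 + ‖z‖ ^ 2) ^ 2 := by
  have hd : 1 + ‖z‖ ^ 2 ≠ 0 := by positivity
  rw [Complex.sq_norm, Complex.normSq_apply, bkMap_re, bkMap_im, Complex.sq_norm,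
    Complex.normSq_apply]
  field_simp
  ring

theorem bkMap_abs_eq_one_iff (z : ℂ) : ‖bkMap z‖ = 1 ↔ z.im = 0 := by
  have hd : 1 + ‖z‖ ^ 2 ≠ 0 := by positivity
  rw [← pow_eq_one_iff_of_nonneg (norm_nonneg _) two_ne_zero, eq_comm, ← sub_eq_zero,
    one_sub_sq_norm_bkMap]
  simp [hd]
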